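/- arXiv:1912.10039 — 4 statements merged into one kernel-verified Lean document; each statement's English description precedes it below -/
import Mathlib

section
/- Let X be a Banach space and A : X → X* a monotone operator (i.e., ⟨Ax − Ay, x − y⟩ ≥ 0 for all x, y ∈ X). Then A is locally bounded: for every x₀ ∈ X there exist constants ε, δ > 0 such that ‖Ax‖_{X*} ≤ ε for all x ∈ X with ‖x − x₀‖_X ≤ δ. -/
/-- every monotone operator `A : X → X*` on a Banach space is locally bounded. -/
theorem stmt_0 {X : Type*} [NormedAddCommGroup X] [NormedSpace ℝ X] [CompleteSpace X]
    (A : X → StrongDual ℝ X)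
    (hmono : ∀ x y : X, 0 ≤ (A x - A y) (x - y)) :
    ∀ x₀ : X, ∃ ε δ : ℝ, 0 < ε ∧ 0 < δ ∧ ∀ x : X, ‖x - x₀‖ ≤ δ → ‖A x‖ ≤ ε := by
  intro x₀
  by_contra hcon
  push_neg at hcon
  have hu : ∀ n : ℕ, ∃ x : X, ‖x - x₀‖ ≤ 1/((n:ℝ)+1) ∧ (n:ℝ)+1 < ‖A x‖ := by
    intro n
    exact hcon ((n:ℝ)+1) (1/((n:ℝ)+1)) (by positivity) (by positivity)
  choose u hu1 hu2 using hu
  set d : ℕ → ℝ := fun n => 1 + ‖A (u n)‖ * ‖u n - x₀‖ with hd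
  have hdn : ∀ n, 0 ≤ ‖A (u n)‖ * ‖u n - x₀‖ := fun n => by positivity
  have hd1 : ∀ n, 1 ≤ d n := fun n => le_add_of_nonneg_right (hdn n)
  have hdpos : ∀ n, 0 < d n := fun n => lt_of_lt_of_le one_pos (hd1 n)
  have hun1 : ∀ n, ‖u n - x₀‖ ≤ 1 := by
    intro n
    refine (hu1 n).trans ?_
    rw [div_le_one (by positivity)]
    linarith [Nat.cast_nonneg (α := ℝ) n]
  -- key monotonicity estimate
  have key : ∀ (n : ℕ) (z : X),
      (A (u n)) z ≤ ‖A (u n)‖ * ‖u n - x₀‖ + ‖A (x₀ + z)‖ * (‖z‖ + 1) := by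
    intro n z
    have hrw : u n - (x₀ + z) = (u n - x₀) - z := by abel
    have h0 : 0 ≤ (A (u n)) ((u n - x₀) - z) - (A (x₀ + z)) ((u n - x₀) - z) := by
      have h := hmono (u n) (x₀ + z)
      rw [hrw] at h
      simpa [ContinuousLinearMap.sub_apply] using h
    have t1 : (A (u n)) z = (A (u n)) (u n - x₀) - (A (u n)) ((u n - x₀) - z) := by
      have := map_sub (A (u n)) (u n - x₀) z
      linarith
    have b1 : (A (u n)) (u n - x₀) ≤ ‖A (u n)‖ * ‖u n - x₀‖ :=
      (le_abs_self _).trans ((A (u n)).le_opNorm (u n - x₀))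
    have hnw : ‖(u n - x₀) - z‖ ≤ ‖z‖ + 1 := by
      calc ‖(u n - x₀) - z‖ ≤ ‖u n - x₀‖ + ‖z‖ := norm_sub_le _ _
        _ ≤ ‖z‖ + 1 := by linarith [hun1 n]
    have b2 : -(A (x₀ + z)) ((u n - x₀) - z) ≤ ‖A (x₀ + z)‖ * (‖z‖ + 1) := by
      have habs : |(A (x₀ + z)) ((u n - x₀) - z)| ≤ ‖A (x₀ + z)‖ * ‖(u n - x₀) - z‖ :=
        (A (x₀ + z)).le_opNorm _
      have := (abs_le.mp habs).1
      have hle : ‖A (x₀ + z)‖ * ‖(u n - x₀) - z‖ ≤ ‖A (x₀ + z)‖ * (‖z‖ + 1) :=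
        mul_le_mul_of_nonneg_left hnw (norm_nonneg _)
      linarith
    linarith
  -- pointwise bound for the rescaled family
  set g : ℕ → X →L[ℝ] ℝ := fun n => (d n)⁻¹ • A (u n) with hg
  have hbound : ∀ z : X, ∃ C, ∀ n, ‖g n z‖ ≤ C := by
    intro z
    refine ⟨1 + max (‖A (x₀ + z)‖ * (‖z‖ + 1)) (‖A (x₀ + -z)‖ * (‖z‖ + 1)), fun n => ?_⟩
    have k1 := key n z
    have k2 := key n (-z)
    rw [map_neg, norm_neg] at k2
    set C := max (‖A (x₀ + z)‖ * (‖z‖ + 1)) (‖A (x₀ + -z)‖ * (‖z‖ + 1)) with hC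
    have hC0 : 0 ≤ C := le_max_of_le_left (by positivity)
    have hCl : ‖A (x₀ + z)‖ * (‖z‖ + 1) ≤ C := le_max_left _ _
    have hCr : ‖A (x₀ + -z)‖ * (‖z‖ + 1) ≤ C := le_max_right _ _
    have hdd : d n = 1 + ‖A (u n)‖ * ‖u n - x₀‖ := rfl
    have habs : |(A (u n)) z| ≤ d n * (1 + C) := by
      rw [abs_le, hdd]
      constructor
      · nlinarith [hdn n, mul_nonneg (hdn n) hC0]
      · nlinarith [hdn n, mul_nonneg (hdn n) hC0]
    have hnorm : ‖g n z‖ = (d n)⁻¹ * |(A (u n)) z| := by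
      rw [hg]
      simp only [ContinuousLinearMap.smul_apply, smul_eq_mul, Real.norm_eq_abs, abs_mul,
        abs_inv]
      rw [abs_of_pos (hdpos n)]
    rw [hnorm, inv_mul_le_iff₀ (hdpos n)]
    exact habs
  obtain ⟨M, hM⟩ := banach_steinhaus hbound
  have hM0 : 0 ≤ M := (norm_nonneg (g 0)).trans (hM 0)
  have hgn : ∀ n, ‖g n‖ = (d n)⁻¹ * ‖A (u n)‖ := by
    intro n
    have h1 : ‖g n‖ = ‖(d n)⁻¹‖ * ‖A (u n)‖ := by rw [hg]; exact norm_smul ((d n)⁻¹) (A (u n))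
    rw [h1, Real.norm_eq_abs, abs_inv, abs_of_pos (hdpos n)]
  have hAle : ∀ n, ‖A (u n)‖ ≤ M * d n := by
    intro n
    have := hM n
    rw [hgn n, inv_mul_le_iff₀ (hdpos n)] at this
    linarith [this]
  -- derive a contradiction for large n
  set n := ⌈2 * M⌉₊ + 1 with hn
  have hn2M : 2 * M ≤ (n : ℝ) := by
    have := Nat.le_ceil (2 * M)
    push_cast [hn]
    linarith
  have h1 := hAle n
  have h2 : ‖A (u n)‖ * ‖u n - x₀‖ ≤ ‖A (u n)‖ * (1/((n:ℝ)+1)) :=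
    mul_le_mul_of_nonneg_left (hu1 n) (norm_nonneg _)
  have h3 := hu2 n
  have hnpos : (0:ℝ) < (n:ℝ) + 1 := by positivity
  -- ‖A (u n)‖ ≤ M + M * ‖A (u n)‖ / (n+1), with n+1 ≥ 2M and n+1 > 2M
  have h4 : ‖A (u n)‖ ≤ M + M * (‖A (u n)‖ * (1/((n:ℝ)+1))) := by
    have : M * (‖A (u n)‖ * ‖u n - x₀‖) ≤ M * (‖A (u n)‖ * (1/((n:ℝ)+1))) :=
      mul_le_mul_of_nonneg_left h2 hM0
    simp only [hd] at h1
    nlinarith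
  have h5 : M * (‖A (u n)‖ * (1/((n:ℝ)+1))) ≤ ‖A (u n)‖ / 2 := by
    have he : M * (‖A (u n)‖ * (1/((n:ℝ)+1))) = (M / ((n:ℝ)+1)) * ‖A (u n)‖ := by
      field_simp
    rw [he]
    have hq : M / ((n:ℝ)+1) ≤ 1/2 := by
      rw [div_le_iff₀ hnpos]; linarith
    calc (M / ((n:ℝ)+1)) * ‖A (u n)‖ ≤ (1/2) * ‖A (u n)‖ :=
          mul_le_mul_of_nonneg_right hq (norm_nonneg _)
      _ = ‖A (u n)‖ / 2 := by ring
  linarith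
end

section
/- Let X be a Banach space, A : X → X* monotone, S ⊆ X a set, h : S → [0,1] a function, and M, C > 0 constants such that ‖s‖_X ≤ M and h(s)⟨As, s⟩_X ≤ C for all s ∈ S. Then there exists a constant K = K(C, M, A) > 0 such that ‖h(s) · As‖_{X*} ≤ K for all s ∈ S. -/
/-- bound on compressed images of a monotone operator. -/
theorem stmt_1 {X : Type*} [NormedAddCommGroup X] [NormedSpace ℝ X] [CompleteSpace X]
    (A : X → StrongDual ℝ X)
    (hmono : ∀ x y : X, 0 ≤ (A x - A y) (x - y))
    (S : Set X) (h : X → ℝ) (hh : ∀ s ∈ S, h s ∈ Set.Icc (0 : ℝ) 1)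
    (M C : ℝ) (hM : 0 < M) (hC : 0 < C)
    (hSbnd : ∀ s ∈ S, ‖s‖ ≤ M) (hhA : ∀ s ∈ S, h s * (A s) s ≤ C) :
    ∃ K : ℝ, 0 < K ∧ ∀ s ∈ S, ‖h s • A s‖ ≤ K := by
  -- key pointwise bound from monotonicity
  have key : ∀ s ∈ S, ∀ x : X, h s * (A s x) ≤ C + ‖A x‖ * (M + ‖x‖) := by
    intro s hs x
    have hmx := hmono s x
    rw [ContinuousLinearMap.sub_apply] at hmx
    have h1 : A s x ≤ A s s - A x (s - x) := by
      have := (map_sub (A s) s x)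
      nlinarith [hmx]
    have hh0 := (hh s hs).1
    have hh1 := (hh s hs).2
    have habs : |A x (s - x)| ≤ ‖A x‖ * (M + ‖x‖) := by
      have := (A x).le_opNorm (s - x)
      have hnorm : ‖s - x‖ ≤ M + ‖x‖ := by
        calc ‖s - x‖ ≤ ‖s‖ + ‖x‖ := norm_sub_le _ _
        _ ≤ M + ‖x‖ := by linarith [hSbnd s hs]
      calc |A x (s - x)| = ‖A x (s - x)‖ := (Real.norm_eq_abs _).symm
      _ ≤ ‖A x‖ * ‖s - x‖ := this
      _ ≤ ‖A x‖ * (M + ‖x‖) := by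
          have := norm_nonneg (A x); nlinarith
    have hAss := hhA s hs
    have h2 : h s * A s x ≤ h s * A s s + h s * (-(A x (s - x))) := by nlinarith
    have h3 : h s * (-(A x (s - x))) ≤ ‖A x‖ * (M + ‖x‖) := by
      have habs' : -(A x (s - x)) ≤ ‖A x‖ * (M + ‖x‖) := by
        have := abs_le.mp habs; linarith [this.1]
      have hbnd_nonneg : 0 ≤ ‖A x‖ * (M + ‖x‖) := by
        have := norm_nonneg (A x); have := norm_nonneg x; nlinarith
      nlinarith [neg_abs_le (A x (s - x)), abs_le.mp habs]
    linarith
  -- pointwise bound on absolute value, for Banach–Steinhaus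
  have ptwise : ∀ x : X, ∃ Cx : ℝ, ∀ i : S,
      ‖(h i.1 • A i.1) x‖ ≤ Cx := by
    intro x
    refine ⟨C + (‖A x‖ + ‖A (-x)‖) * (M + ‖x‖), fun ⟨s, hs⟩ => ?_⟩
    simp only [ContinuousLinearMap.smul_apply, smul_eq_mul, Real.norm_eq_abs]
    have k1 := key s hs x
    have k2 := key s hs (-x)
    rw [map_neg, norm_neg] at k2
    have hAx := norm_nonneg (A x)
    have hAnx := norm_nonneg (A (-x))
    have hx := norm_nonneg x
    rw [abs_le]
    constructor
    · nlinarith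
    · nlinarith
  obtain ⟨C', hC'⟩ := banach_steinhaus (fun x => ptwise x) (g := fun i : S => h i.1 • A i.1)
  refine ⟨max C' 1, lt_of_lt_of_le one_pos (le_max_right _ _), fun s hs => ?_⟩
  exact le_trans (hC' ⟨s, hs⟩) (le_max_left _ _)
end

section
/- A sequence (xₙ) in C⁰([0,T], X) converges weakly to x in C⁰([0,T], X) if and only if (xₙ) is bounded in C⁰([0,T], X) and xₙ(t) ⇀ x(t) weakly in X for every t ∈ [0,T]. -/
/-!
Necessity: a weakly convergent sequence is bounded by the uniform boundedness principle applied
in the bidual, and evaluation at a point is a continuous linear map.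

Sufficiency: with `B` the weak-* compact unit ball of the dual of `X`, the map
`u ↦ ((t, f) ↦ f (u t))` embeds `C(K, X)` isometrically into `C(K × B, ℝ)`, and by Hahn–Banach
every functional on `C(K, X)` factors through it. So it suffices to show `ψ (g n) → 0` for a
functional `ψ` on `C(S, ℝ)`, `S` compact, and a bounded sequence `g n` tending to `0` pointwise.
The modulus `|ψ|(f) = sup {ψ g | -f ≤ g ≤ f}` is additive on nonnegative functions by the Riesz
decomposition property, so by Riesz–Markov–Kakutani it is integration against a finite measure
`μ`. Then `|ψ (g n)| ≤ ∫ |g n| dμ → 0` by dominated convergence.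
-/

open Filter

/-- Weak convergence of a sequence in a normed space, in terms of the continuous dual. -/
def WeakConv {E : Type*} [NormedAddCommGroup E] [NormedSpace ℝ E]
    (u : ℕ → E) (x : E) : Prop :=
  ∀ f : StrongDual ℝ E, Tendsto (fun n => f (u n)) atTop (nhds (f x))

open Set Topology MeasureTheory Pointwise CompactlySupportedContinuousMap
open scoped NNReal CompactlySupported

theorem Icc_neg_add_Icc_neg {α : Type*} [AddCommGroup α] [Lattice α] [IsOrderedAddMonoid α]
    {a b : α} (ha : 0 ≤ a) (hb : 0 ≤ b) :
    Icc (-a) a + Icc (-b) b = Icc (-(a + b)) (a + b) := by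
  refine (neg_add a b ▸ Icc_add_Icc_subset (-a) a (-b) b).antisymm fun g ⟨hlo, hhi⟩ => ?_
  refine ⟨g ⊓ a ⊔ -a, ⟨le_sup_right, sup_le inf_le_right (neg_le_self ha)⟩,
    g - (g ⊓ a ⊔ -a), ⟨?_, ?_⟩, add_sub_cancel _ _⟩
  · rw [neg_le_sub_iff_le_add]
    refine sup_le (inf_le_left.trans (le_add_of_nonneg_right hb)) ?_
    simpa using add_le_add_left hlo b
  · rw [sub_le_comm]
    exact le_sup_of_le_left (le_inf (sub_le_self _ hb) (sub_le_iff_le_add.2 hhi))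

section DualModulus

variable {S : Type*} [TopologicalSpace S] (ψ : StrongDual ℝ C(S, ℝ))

/-- The Riesz–Kantorovich modulus `|ψ| f`. Meaningful only for `0 ≤ f`: otherwise the interval is
empty and the value is the junk `sSup ∅ = 0`. -/
noncomputable def dualModulus (f : C(S, ℝ)) : ℝ :=
  sSup (ψ '' Icc (-f) f)

theorem dualModulus_smul {c : ℝ} (hc : 0 ≤ c) (f : C(S, ℝ)) :
    dualModulus ψ (c • f) = c * dualModulus ψ f := by
  rcases hc.eq_or_lt with rfl | hc
  · simp [dualModulus]
  · have hIcc : c • Icc (-f) f = Icc (-(c • f)) (c • f) := by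
      rw [← image_smul, ← smul_neg]
      exact (OrderIso.smulRight hc).image_Icc _ _
    rw [dualModulus, dualModulus, ← hIcc, image_smul_setₛₗ, RingHom.id_apply,
      Real.sSup_smul_of_nonneg hc.le, smul_eq_mul]

variable [CompactSpace S]

theorem ContinuousMap.norm_le_of_mem_Icc_neg {f g : C(S, ℝ)} (hg : g ∈ Icc (-f) f) :
    ‖g‖ ≤ ‖f‖ := by
  refine (ContinuousMap.norm_le _ (norm_nonneg f)).2 fun s => ?_
  calc ‖g s‖ = |g s| := Real.norm_eq_abs _
    _ ≤ f s := abs_le.2 ⟨hg.1 s, hg.2 s⟩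
    _ ≤ ‖f‖ := (Real.le_norm_self _).trans (f.norm_coe_le_norm s)

theorem bddAbove_image_Icc_neg (f : C(S, ℝ)) : BddAbove (ψ '' Icc (-f) f) := by
  refine ⟨‖ψ‖ * ‖f‖, ?_⟩
  rintro _ ⟨g, hg, rfl⟩
  exact (Real.le_norm_self _).trans (ψ.le_opNorm_of_le (ContinuousMap.norm_le_of_mem_Icc_neg hg))

theorem le_dualModulus {f g : C(S, ℝ)} (hg : g ∈ Icc (-f) f) : ψ g ≤ dualModulus ψ f :=
  le_csSup (bddAbove_image_Icc_neg ψ f) (mem_image_of_mem ψ hg)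

theorem dualModulus_nonneg {f : C(S, ℝ)} (hf : 0 ≤ f) : 0 ≤ dualModulus ψ f := by
  simpa using le_dualModulus ψ (g := 0) ⟨neg_nonpos.2 hf, hf⟩

theorem dualModulus_add {f₁ f₂ : C(S, ℝ)} (hf₁ : 0 ≤ f₁) (hf₂ : 0 ≤ f₂) :
    dualModulus ψ (f₁ + f₂) = dualModulus ψ f₁ + dualModulus ψ f₂ := by
  have hne : ∀ {f : C(S, ℝ)}, 0 ≤ f → (ψ '' Icc (-f) f).Nonempty :=
    fun hf => (nonempty_Icc.2 (neg_le_self hf)).image ψ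
  rw [dualModulus, ← Icc_neg_add_Icc_neg hf₁ hf₂, image_add]
  exact csSup_add (hne hf₁) (bddAbove_image_Icc_neg ψ f₁) (hne hf₂) (bddAbove_image_Icc_neg ψ f₂)

theorem abs_apply_le_dualModulus_abs (g : C(S, ℝ)) : |ψ g| ≤ dualModulus ψ |g| := by
  have hmem : ∀ h : C(S, ℝ), h ∈ Icc (-|h|) |h| :=
    fun h => ⟨neg_le.1 (neg_le_abs h), le_abs_self h⟩
  refine abs_le.2 ⟨?_, le_dualModulus ψ (hmem g)⟩
  rw [neg_le, ← map_neg]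
  exact le_dualModulus ψ (abs_neg g ▸ hmem (-g))

noncomputable def dualModulusNNReal : C_c(S, ℝ≥0) →ₗ[ℝ≥0] ℝ≥0 where
  toFun f := ⟨dualModulus ψ f.toReal.toContinuousMap, dualModulus_nonneg ψ fun s => by simp⟩
  map_add' f g := by
    ext
    have h : (f + g).toReal.toContinuousMap =
        f.toReal.toContinuousMap + g.toReal.toContinuousMap := by
      ext; simp
    show dualModulus ψ _ = dualModulus ψ _ + dualModulus ψ _
    rw [h]
    exact dualModulus_add ψ (fun s => by simp) (fun s => by simp)
  map_smul' c f := by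
    ext
    have h : (c • f).toReal.toContinuousMap = (c : ℝ) • f.toReal.toContinuousMap := by
      ext; simp [NNReal.smul_def]
    show dualModulus ψ _ = c * dualModulus ψ _
    rw [h]
    exact dualModulus_smul ψ c.2 _

theorem exists_isFiniteMeasure_enorm_le_lintegral [T2Space S] [MeasurableSpace S]
    [BorelSpace S] :
    ∃ μ : Measure S, IsFiniteMeasure μ ∧ ∀ g : C(S, ℝ), ‖ψ g‖ₑ ≤ ∫⁻ s, ‖g s‖ₑ ∂μ := by
  refine ⟨NNRealRMK.rieszMeasure (dualModulusNNReal ψ), inferInstance, fun g => ?_⟩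
  let absg : C_c(S, ℝ≥0) := continuousMapEquiv ⟨fun s => ‖g s‖₊, by fun_prop⟩
  have habsg : absg.toReal.toContinuousMap = |g| := by ext; simp [absg]
  calc ‖ψ g‖ₑ = ENNReal.ofReal |ψ g| := Real.enorm_eq_ofReal_abs _
    _ ≤ ENNReal.ofReal (dualModulus ψ |g|) :=
      ENNReal.ofReal_le_ofReal (abs_apply_le_dualModulus_abs ψ g)
    _ = dualModulusNNReal ψ absg := by rw [← habsg]; exact ENNReal.ofReal_eq_coe_nnreal _
    _ = ∫⁻ s, ‖g s‖ₑ ∂(NNRealRMK.rieszMeasure (dualModulusNNReal ψ)) :=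
      (NNRealRMK.lintegral_rieszMeasure _ absg).symm

theorem tendsto_apply_zero_of_bounded_of_tendsto_pointwise [T2Space S] {g : ℕ → C(S, ℝ)}
    {M : ℝ} (hM : ∀ n, ‖g n‖ ≤ M) (hg : ∀ s, Tendsto (fun n => g n s) atTop (𝓝 0)) :
    Tendsto (fun n => ψ (g n)) atTop (𝓝 0) := by
  borelize S
  obtain ⟨μ, hμ, hψμ⟩ := exists_isFiniteMeasure_enorm_le_lintegral ψ
  have hbound : ∀ n s, ‖g n s‖ₑ ≤ ENNReal.ofReal M := fun n s => by
    rw [← ofReal_norm]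
    exact ENNReal.ofReal_le_ofReal ((g n).norm_coe_le_norm s |>.trans (hM n))
  have hlim : Tendsto (fun n => ∫⁻ s, ‖g n s‖ₑ ∂μ) atTop (𝓝 0) := by
    simpa using tendsto_lintegral_of_dominated_convergence (fun _ => ENNReal.ofReal M)
      (fun n => (g n).continuous.enorm.measurable) (fun n => ae_of_all _ (hbound n))
      (by simp [lintegral_const, ENNReal.mul_ne_top]) (ae_of_all _ fun s => (hg s).enorm)
  rw [tendsto_zero_iff_enorm_tendsto_zero]
  exact tendsto_of_tendsto_of_tendsto_of_le_of_le tendsto_const_nhds hlim (fun _ => zero_le)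
    fun n => hψμ (g n)

end DualModulus

theorem LinearIsometry.exists_strongDual_comp_eq {𝕜 E F : Type*} [RCLike 𝕜]
    [NormedAddCommGroup E] [NormedSpace 𝕜 E] [NormedAddCommGroup F] [NormedSpace 𝕜 F]
    (J : E →ₗᵢ[𝕜] F) (φ : StrongDual 𝕜 E) : ∃ ψ : StrongDual 𝕜 F, ∀ u, ψ (J u) = φ u := by
  let e := J.equivRange
  obtain ⟨ψ, hψ, -⟩ :=
    exists_extension_norm_eq _ (φ.comp e.symm.toContinuousLinearEquiv.toContinuousLinearMap)
  exact ⟨ψ, fun u => by simpa [e] using hψ (e u)⟩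

section DualPairing

variable {X : Type*} [NormedAddCommGroup X] [NormedSpace ℝ X]

variable (X) in
def weakDualClosedUnitBall : Set (WeakDual ℝ X) :=
  WeakDual.toStrongDual ⁻¹' Metric.closedBall 0 1

instance : CompactSpace (weakDualClosedUnitBall X) :=
  isCompact_iff_compactSpace.1 (WeakDual.isCompact_closedBall 0 1)

theorem norm_apply_le_of_mem_weakDualClosedUnitBall (f : weakDualClosedUnitBall X) (v : X) :
    ‖(f : WeakDual ℝ X) v‖ ≤ ‖v‖ := by
  simpa using (WeakDual.toStrongDual (f : WeakDual ℝ X)).le_of_opNorm_le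
    (mem_closedBall_zero_iff.1 f.2) v

namespace ContinuousMap

variable {K : Type*} [TopologicalSpace K]

noncomputable def dualPairing (u : C(K, X)) : C(K × weakDualClosedUnitBall X, ℝ) where
  toFun p := (p.2 : WeakDual ℝ X) (u p.1)
  continuous_toFun := by
    refine continuous_iff_continuousAt.2 fun ⟨t₀, f₀⟩ => ?_
    have hincr : Tendsto (fun p : K × weakDualClosedUnitBall X =>
        (p.2 : WeakDual ℝ X) (u p.1 - u t₀)) (𝓝 (t₀, f₀)) (𝓝 0) := by
      refine squeeze_zero_norm (fun p => norm_apply_le_of_mem_weakDualClosedUnitBall p.2 _) ?_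
      exact ((u.continuous.comp continuous_fst).sub continuous_const).norm.tendsto' _ _ (by simp)
    have hbase : Tendsto (fun p : K × weakDualClosedUnitBall X => (p.2 : WeakDual ℝ X) (u t₀))
        (𝓝 (t₀, f₀)) (𝓝 ((f₀ : WeakDual ℝ X) (u t₀))) :=
      ((WeakDual.eval_continuous (u t₀)).comp (continuous_subtype_val.comp continuous_snd)).tendsto _
    simpa [ContinuousAt] using hincr.add hbase

@[simp]
theorem dualPairing_apply (u : C(K, X)) (p : K × weakDualClosedUnitBall X) :
    u.dualPairing p = (p.2 : WeakDual ℝ X) (u p.1) :=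
  rfl

variable [CompactSpace K]

variable (X K) in
noncomputable def dualPairingₗᵢ : C(K, X) →ₗᵢ[ℝ] C(K × weakDualClosedUnitBall X, ℝ) where
  toFun := dualPairing
  map_add' u v := by ext; simp
  map_smul' c u := by ext; simp
  norm_map' u := by
    refine le_antisymm ((ContinuousMap.norm_le _ (norm_nonneg u)).2 fun p => ?_)
      ((ContinuousMap.norm_le _ (norm_nonneg _)).2 fun t => ?_)
    · exact (norm_apply_le_of_mem_weakDualClosedUnitBall p.2 _).trans (u.norm_coe_le_norm p.1)
    · obtain ⟨g, hg, hgu⟩ := exists_dual_vector'' ℝ (u t)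
      let f : weakDualClosedUnitBall X := ⟨StrongDual.toWeakDual g, mem_closedBall_zero_iff.2 hg⟩
      calc ‖u t‖ = u.dualPairing (t, f) := by simpa [f] using hgu.symm
        _ ≤ ‖u.dualPairing (t, f)‖ := Real.le_norm_self _
        _ ≤ ‖u.dualPairing‖ := u.dualPairing.norm_coe_le_norm (t, f)

end ContinuousMap

end DualPairing

section WeakConv

variable {E F : Type*} [NormedAddCommGroup E] [NormedSpace ℝ E] [NormedAddCommGroup F]
  [NormedSpace ℝ F] {u : ℕ → E} {x : E}

theorem WeakConv.map (h : WeakConv u x) (L : E →L[ℝ] F) : WeakConv (fun n => L (u n)) (L x) :=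
  fun f => h (f.comp L)

theorem WeakConv.exists_norm_le (h : WeakConv u x) : ∃ M : ℝ, ∀ n, ‖u n‖ ≤ M := by
  obtain ⟨M, hM⟩ := banach_steinhaus (g := fun n => NormedSpace.inclusionInDoubleDual ℝ E (u n))
    fun f => (h f).norm.bddAbove_range.imp fun _ hC n => hC ⟨n, rfl⟩
  exact ⟨M, fun n => (NormedSpace.inclusionInDoubleDualLi ℝ).norm_map (u n) ▸ hM n⟩

end WeakConv

namespace ContinuousMap

variable {X K : Type*} [NormedAddCommGroup X] [NormedSpace ℝ X] [TopologicalSpace K]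
  [CompactSpace K] [T2Space K] {u : ℕ → C(K, X)} {x : C(K, X)}

theorem weakConv_of_bounded_of_weakConv_apply {M : ℝ} (hM : ∀ n, ‖u n‖ ≤ M)
    (hpt : ∀ t, WeakConv (fun n => u n t) (x t)) : WeakConv u x := by
  intro φ
  let J := dualPairingₗᵢ X K
  obtain ⟨ψ, hψ⟩ := J.exists_strongDual_comp_eq φ
  have hbdd : ∀ n, ‖J (u n - x)‖ ≤ M + ‖x‖ := fun n => by
    rw [J.norm_map]
    exact (norm_sub_le _ _).trans (add_le_add_left (hM n) _)
  have hpt' : ∀ p, Tendsto (fun n => J (u n - x) p) atTop (𝓝 0) := fun ⟨t, f⟩ => by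
    simpa [J, dualPairingₗᵢ] using
      (hpt t (WeakDual.toStrongDual (f : WeakDual ℝ X))).sub_const ((f : WeakDual ℝ X) (x t))
  have hlim := tendsto_apply_zero_of_bounded_of_tendsto_pointwise ψ hbdd hpt'
  simp only [hψ, map_sub] at hlim
  simpa using hlim.add_const (φ x)

theorem weakConv_iff :
    WeakConv u x ↔ (∃ M : ℝ, ∀ n, ‖u n‖ ≤ M) ∧ ∀ t, WeakConv (fun n => u n t) (x t) :=
  ⟨fun h => ⟨h.exists_norm_le, fun t => h.map (evalCLM ℝ t)⟩,
    fun ⟨⟨_, hM⟩, hpt⟩ => weakConv_of_bounded_of_weakConv_apply hM hpt⟩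

end ContinuousMap

theorem stmt_2_general {X : Type*} [NormedAddCommGroup X] [NormedSpace ℝ X]
    (T : ℝ)
    (u : ℕ → C(Set.Icc (0:ℝ) T, X)) (x : C(Set.Icc (0:ℝ) T, X)) :
    WeakConv u x ↔
      ((∃ M : ℝ, ∀ n, ‖u n‖ ≤ M) ∧ ∀ t : Set.Icc (0:ℝ) T, WeakConv (fun n => u n t) (x t)) :=
  ContinuousMap.weakConv_iff

/-- weak convergence in `C⁰([0,T],X)` is equivalent to boundedness plus
pointwise weak convergence in `X`. -/
theorem stmt_2 {X : Type*} [NormedAddCommGroup X] [NormedSpace ℝ X] [CompleteSpace X]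
    (T : ℝ) (hT : 0 < T)
    (u : ℕ → C(Set.Icc (0:ℝ) T, X)) (x : C(Set.Icc (0:ℝ) T, X)) :
    WeakConv u x ↔
      ((∃ M : ℝ, ∀ n, ‖u n‖ ≤ M) ∧ ∀ t : Set.Icc (0:ℝ) T, WeakConv (fun n => u n t) (x t)) :=
  stmt_2_general T u x
end

section
/- Let (X, Y) be a compatible couple. A sequence (xₙ) in X ∩_j Y converges weakly to x ∈ X ∩_j Y if and only if xₙ ⇀ x weakly in X and jxₙ ⇀ jx weakly in Y. -/
open Filter

/-- The pull-back intersection of a compatible couple `(X, Y, Z, e_X, e_Y)`, realized as the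
submodule `{(x,y) | e_X x = e_Y y}` of `X × Y`; the intersection embedding
`j = e_Y⁻¹ e_X` is the second component. -/
def pbInter {X Y Z : Type*} [NormedAddCommGroup X] [NormedSpace ℝ X]
    [NormedAddCommGroup Y] [NormedSpace ℝ Y]
    [AddCommGroup Z] [Module ℝ Z] [TopologicalSpace Z]
    (eX : X →L[ℝ] Z) (eY : Y →L[ℝ] Z) : Submodule ℝ (X × Y) where
  carrier := {q | eX q.1 = eY q.2}
  add_mem' := by
    intro a b ha hb
    simp only [Set.mem_setOf_eq, Prod.fst_add, Prod.snd_add, map_add] at *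
    rw [ha, hb]
  zero_mem' := by simp
  smul_mem' := by
    intro c a ha
    simp only [Set.mem_setOf_eq, Prod.smul_fst, Prod.smul_snd, map_smul] at *
    rw [ha]

/-- a sequence in `X ∩_j Y` converges weakly to `x` iff `xₙ ⇀ x` weakly in `X`
and `j xₙ ⇀ j x` weakly in `Y`. -/
theorem stmt_9 {X Y Z : Type*} [NormedAddCommGroup X] [NormedSpace ℝ X] [CompleteSpace X]
    [NormedAddCommGroup Y] [NormedSpace ℝ Y] [CompleteSpace Y]
    [AddCommGroup Z] [Module ℝ Z] [TopologicalSpace Z] [T2Space Z]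
    [IsTopologicalAddGroup Z] [ContinuousSMul ℝ Z]
    (eX : X →L[ℝ] Z) (eY : Y →L[ℝ] Z)
    (heX : Function.Injective eX) (heY : Function.Injective eY)
    (u : ℕ → ↥(pbInter eX eY)) (x : ↥(pbInter eX eY)) :
    WeakConv u x ↔
      (WeakConv (fun n => ((u n : X × Y)).1) ((x : X × Y)).1 ∧
       WeakConv (fun n => ((u n : X × Y)).2) ((x : X × Y)).2) := by
  constructor
  · intro h
    refine ⟨fun f => h (f.comp ((ContinuousLinearMap.fst ℝ X Y).comp
        (pbInter eX eY).subtypeL)), fun f => h (f.comp ((ContinuousLinearMap.snd ℝ X Y).comp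
        (pbInter eX eY).subtypeL))⟩
  · rintro ⟨h1, h2⟩ f
    obtain ⟨F, hF, -⟩ := exists_extension_norm_eq (pbInter eX eY) f
    have key : ∀ q : ↥(pbInter eX eY),
        f q = (F.comp (ContinuousLinearMap.inl ℝ X Y)) (q : X × Y).1
            + (F.comp (ContinuousLinearMap.inr ℝ X Y)) (q : X × Y).2 := by
      intro q
      rw [← hF q]
      simp only [ContinuousLinearMap.comp_apply, ContinuousLinearMap.inl_apply,
        ContinuousLinearMap.inr_apply, ← map_add]
      congr 1
      simp
    simp only [key]
    exact (h1 (F.comp (ContinuousLinearMap.inl ℝ X Y))).add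
      (h2 (F.comp (ContinuousLinearMap.inr ℝ X Y)))
end
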